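/- arXiv:1706.08014 — 4 statements merged into one kernel-verified Lean document; each statement's English description precedes it below -/
import Mathlib

section
/- Let β ≥ 1 be a real number and let S ⊆ ℂ be a Borel set. The following are equivalent: (i) there exists b > 0 such that the set S ∖ 𝒫^β_b is bounded; (ii) every finite positive Borel measure ν on ℂ with ν(ℂ ∖ S) = 0 that has all exponential moments satisfies ∫_ℂ e^(s·|λ|^(1/β)) · e^(t·Re λ) dν(λ) < ∞ for all s > 0 and all t ≥ 0. -/
/-!
If `S` lies in the parabolic region `𝒫^β_b` up to a bounded set, then on that region
`|λ|^(1/β) ≤ 1 + (1 + 1/b) Re λ` (using `|Im λ| ≤ (Re λ / b)^β` and subadditivity of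
`x ↦ x^(1/β)`), so the weight `e^(s|λ|^(1/β)) e^(t Re λ)` is dominated on `S` by a constant plus
a multiple of the exponential moment `e^((t + s(1 + 1/b)) Re λ)`.

Conversely, if no `S \ 𝒫^β_{1/(n+1)}` is bounded, pick `λₙ ∈ S \ 𝒫^β_{1/(n+1)}` with
`aₙ := |λₙ|^(1/β) ≥ n + 1`, so that `(n + 1) Re λₙ ≤ aₙ`. The discrete measure
`∑ₙ e^(-aₙ) δ_{λₙ}` has all exponential moments, since `t Re λₙ - aₙ ≤ -aₙ / 2` once `n ≥ 2t`,
but integrates `e^(|λ|^(1/β))` to `∑ₙ 1 = ∞`.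
-/

open MeasureTheory Filter Set
open scoped ENNReal

def parabolicRegion (β b : ℝ) : Set ℂ := {z | b * |z.im| ^ (1 / β) ≤ z.re}

lemma Real.rpow_le_one_add {x p : ℝ} (hx : 0 ≤ x) (hp₀ : 0 ≤ p) (hp₁ : p ≤ 1) :
    x ^ p ≤ 1 + x := by
  rcases le_total x 1 with h | h
  · linarith [Real.rpow_le_one hx h hp₀]
  · linarith [Real.rpow_le_self_of_one_le h hp₁]

lemma norm_rpow_le_of_mem_parabolicRegion {β b : ℝ} {z : ℂ} (hβ : 1 ≤ β) (hb : 0 < b)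
    (hz : z ∈ parabolicRegion β b) : ‖z‖ ^ (1 / β) ≤ 1 + (1 + 1 / b) * z.re := by
  have hβ₀ : 0 < β := by linarith
  have hβi₀ : 0 ≤ 1 / β := by positivity
  have hβi₁ : 1 / β ≤ 1 := (div_le_one hβ₀).mpr hβ
  have hre : 0 ≤ z.re := le_trans (by positivity) hz
  have him : |z.im| ≤ (z.re / b) ^ β := by
    calc |z.im| = (|z.im| ^ (1 / β)) ^ β := by
          rw [← Real.rpow_mul (abs_nonneg _), one_div_mul_cancel hβ₀.ne', Real.rpow_one]
      _ ≤ (z.re / b) ^ β := by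
          gcongr
          rw [le_div_iff₀ hb]
          linarith [hz.out]
  have hnorm : ‖z‖ ≤ z.re + (z.re / b) ^ β := by
    linarith [Complex.norm_le_abs_re_add_abs_im z, abs_of_nonneg hre]
  calc ‖z‖ ^ (1 / β) ≤ (z.re + (z.re / b) ^ β) ^ (1 / β) := by gcongr
    _ ≤ z.re ^ (1 / β) + ((z.re / b) ^ β) ^ (1 / β) :=
        Real.rpow_add_le_add_rpow hre (by positivity) hβi₀ hβi₁
    _ = z.re ^ (1 / β) + z.re / b := by
        rw [← Real.rpow_mul (by positivity), mul_one_div_cancel hβ₀.ne', Real.rpow_one]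
    _ ≤ 1 + z.re + z.re / b := by gcongr; exact Real.rpow_le_one_add hre hβi₀ hβi₁
    _ = 1 + (1 + 1 / b) * z.re := by ring

lemma exp_rpow_norm_mul_exp_re_le {β b C s t : ℝ} {S : Set ℂ} {z : ℂ} (hβ : 1 ≤ β) (hb : 0 < b)
    (hC : ∀ w ∈ S \ parabolicRegion β b, ‖w‖ ≤ C) (hs : 0 ≤ s) (ht : 0 ≤ t) (hz : z ∈ S) :
    Real.exp (s * ‖z‖ ^ (1 / β)) * Real.exp (t * z.re) ≤
      Real.exp (s * (1 + C) + t * C) +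
        Real.exp s * Real.exp ((t + s * (1 + 1 / b)) * z.re) := by
  rw [← Real.exp_add, ← Real.exp_add]
  by_cases hP : z ∈ parabolicRegion β b
  · refine le_add_of_nonneg_of_le (Real.exp_nonneg _) (Real.exp_le_exp.mpr ?_)
    nlinarith [norm_rpow_le_of_mem_parabolicRegion hβ hb hP]
  · refine le_add_of_le_of_nonneg (Real.exp_le_exp.mpr ?_) (Real.exp_nonneg _)
    have hzC : ‖z‖ ≤ C := hC z ⟨hz, hP⟩
    have hrpow : ‖z‖ ^ (1 / β) ≤ 1 + ‖z‖ :=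
      Real.rpow_le_one_add (norm_nonneg z) (by positivity) ((div_le_one (by linarith)).mpr hβ)
    have hre : z.re ≤ C := (Complex.re_le_norm z).trans hzC
    linarith [mul_le_mul_of_nonneg_left (hrpow.trans (by linarith : 1 + ‖z‖ ≤ 1 + C)) hs,
      mul_le_mul_of_nonneg_left hre ht]

lemma lintegral_lt_top_of_ae_le_const_add_mul {α : Type*} [MeasurableSpace α] {μ : Measure α}
    [IsFiniteMeasure μ] {f g : α → ℝ≥0∞} {K c : ℝ≥0∞} (hK : K ≠ ∞) (hc : c ≠ ∞)
    (hg : ∫⁻ x, g x ∂μ < ∞) (hfg : ∀ᵐ x ∂μ, f x ≤ K + c * g x) : ∫⁻ x, f x ∂μ < ∞ :=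
  calc ∫⁻ x, f x ∂μ ≤ ∫⁻ x, K + c * g x ∂μ := lintegral_mono_ae hfg
    _ = K * μ univ + c * ∫⁻ x, g x ∂μ := by
        rw [lintegral_add_left measurable_const, lintegral_const, lintegral_const_mul' _ _ hc]
    _ < ∞ := ENNReal.add_lt_top.mpr
        ⟨ENNReal.mul_lt_top hK.lt_top (measure_lt_top μ _), ENNReal.mul_lt_top hc.lt_top hg⟩

lemma lintegral_exp_rpow_norm_mul_exp_re_lt_top {β b s t : ℝ} {S : Set ℂ} {ν : Measure ℂ}
    [IsFiniteMeasure ν] (hβ : 1 ≤ β) (hb : 0 < b)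
    (hS : Bornology.IsBounded (S \ parabolicRegion β b)) (hν : ν Sᶜ = 0)
    (hmom : ∀ t : ℝ, 0 ≤ t → ∫⁻ z, ENNReal.ofReal (Real.exp (t * z.re)) ∂ν < ∞)
    (hs : 0 ≤ s) (ht : 0 ≤ t) :
    ∫⁻ z, ENNReal.ofReal (Real.exp (s * ‖z‖ ^ (1 / β)) * Real.exp (t * z.re)) ∂ν < ∞ := by
  obtain ⟨C, hC⟩ := isBounded_iff_forall_norm_le.mp hS
  refine lintegral_lt_top_of_ae_le_const_add_mul
    (K := ENNReal.ofReal (Real.exp (s * (1 + C) + t * C))) (c := ENNReal.ofReal (Real.exp s))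
    ENNReal.ofReal_ne_top ENNReal.ofReal_ne_top
    (hmom (t + s * (1 + 1 / b)) (by positivity)) ?_
  filter_upwards [mem_ae_iff.mpr hν] with z hz
  rw [← ENNReal.ofReal_mul (Real.exp_nonneg _),
    ← ENNReal.ofReal_add (Real.exp_nonneg _) (by positivity)]
  exact ENNReal.ofReal_le_ofReal (exp_rpow_norm_mul_exp_re_le hβ hb hC hs ht hz)

lemma summable_exp_mul_sub {t : ℝ} (ht : 0 ≤ t) {a r : ℕ → ℝ}
    (ha : ∀ n : ℕ, (n : ℝ) + 1 ≤ a n) (hr : ∀ n : ℕ, ((n : ℝ) + 1) * r n ≤ a n) :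
    Summable fun n => Real.exp (t * r n - a n) := by
  refine Summable.of_norm_bounded_eventually_nat
    (Real.summable_exp_nat_mul_iff.mpr (by norm_num : (-1 / 2 : ℝ) < 0)) ?_
  filter_upwards [eventually_ge_atTop ⌈2 * t⌉₊] with n hn
  rw [Real.norm_of_nonneg (Real.exp_nonneg _), Real.exp_le_exp]
  have htn : 2 * t ≤ n := Nat.ceil_le.mp hn
  have key : t * r n ≤ a n / 2 := by
    rcases le_or_gt (r n) 0 with h | h
    · linarith [mul_nonpos_of_nonneg_of_nonpos ht h, ha n]
    · linarith [mul_le_mul_of_nonneg_right htn h.le, hr n]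
  linarith [ha n]

lemma lintegral_sum_smul_dirac {α : Type*} [MeasurableSpace α] [MeasurableSingletonClass α]
    (c : ℕ → ℝ≥0∞) (x : ℕ → α) (f : α → ℝ≥0∞) :
    ∫⁻ z, f z ∂(Measure.sum fun n => c n • Measure.dirac (x n)) = ∑' n, c n * f (x n) := by
  simp only [lintegral_sum_measure, lintegral_smul_measure, lintegral_dirac, smul_eq_mul]

lemma sum_smul_dirac_apply_eq_zero {α : Type*} [MeasurableSpace α] [MeasurableSingletonClass α]
    (c : ℕ → ℝ≥0∞) {x : ℕ → α} {s : Set α} (hx : ∀ n, x n ∉ s) :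
    (Measure.sum fun n => c n • Measure.dirac (x n)) s = 0 := by
  simp [Measure.sum_apply_of_countable, Measure.dirac_apply, hx]

lemma exists_seq_of_forall_not_isBounded {β : ℝ} (hβ : 0 < β) {S : Set ℂ}
    (h : ∀ b > (0 : ℝ), ¬Bornology.IsBounded (S \ parabolicRegion β b)) :
    ∃ x : ℕ → ℂ, ∀ n : ℕ, x n ∈ S ∧ (n : ℝ) + 1 ≤ ‖x n‖ ^ (1 / β) ∧
      ((n : ℝ) + 1) * (x n).re ≤ ‖x n‖ ^ (1 / β) := by
  have hsel : ∀ n : ℕ, ∃ z ∈ S \ parabolicRegion β (1 / ((n : ℝ) + 1)), ((n : ℝ) + 1) ^ β < ‖z‖ :=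
    fun n => by
      have hn := h (1 / ((n : ℝ) + 1)) (by positivity)
      rw [isBounded_iff_forall_norm_le] at hn
      push Not at hn
      exact hn _
  choose x hxS hxnorm using hsel
  refine ⟨x, fun n => ⟨(hxS n).1, ?_, ?_⟩⟩
  · calc (n : ℝ) + 1 = (((n : ℝ) + 1) ^ β) ^ (1 / β) := by
          rw [← Real.rpow_mul (by positivity), mul_one_div_cancel hβ.ne', Real.rpow_one]
      _ ≤ ‖x n‖ ^ (1 / β) := by gcongr; exact (hxnorm n).le
  · have hre : (x n).re < 1 / ((n : ℝ) + 1) * |(x n).im| ^ (1 / β) := not_le.mp (hxS n).2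
    have him : |(x n).im| ^ (1 / β) ≤ ‖x n‖ ^ (1 / β) := by
      gcongr; exact Complex.abs_im_le_norm _
    rw [one_div_mul_eq_div, lt_div_iff₀' (by positivity)] at hre
    linarith

lemma exists_measure_of_forall_not_isBounded {β : ℝ} (hβ : 0 < β) {S : Set ℂ}
    (h : ∀ b > (0 : ℝ), ¬Bornology.IsBounded (S \ parabolicRegion β b)) :
    ∃ ν : Measure ℂ, IsFiniteMeasure ν ∧ ν Sᶜ = 0 ∧
      (∀ t : ℝ, 0 ≤ t → ∫⁻ z, ENNReal.ofReal (Real.exp (t * z.re)) ∂ν < ∞) ∧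
      ∫⁻ z, ENNReal.ofReal (Real.exp (‖z‖ ^ (1 / β))) ∂ν = ∞ := by
  obtain ⟨x, hx⟩ := exists_seq_of_forall_not_isBounded hβ h
  set a : ℕ → ℝ := fun n => ‖x n‖ ^ (1 / β)
  set ν := Measure.sum fun n => ENNReal.ofReal (Real.exp (-a n)) • Measure.dirac (x n)
  have hweight : ∀ (n : ℕ) (u : ℝ),
      ENNReal.ofReal (Real.exp (-a n)) * ENNReal.ofReal (Real.exp u) =
        ENNReal.ofReal (Real.exp (u - a n)) := fun n u => by
    rw [← ENNReal.ofReal_mul (Real.exp_nonneg _), ← Real.exp_add, neg_add_eq_sub]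
  have hmom : ∀ t : ℝ, 0 ≤ t → ∫⁻ z, ENNReal.ofReal (Real.exp (t * z.re)) ∂ν < ∞ := by
    intro t ht
    rw [lintegral_sum_smul_dirac]
    simp_rw [hweight]
    rw [← ENNReal.ofReal_tsum_of_nonneg (fun n => Real.exp_nonneg _)
      (summable_exp_mul_sub ht (fun n => (hx n).2.1) (fun n => (hx n).2.2))]
    exact ENNReal.ofReal_lt_top
  refine ⟨ν, ⟨by simpa using hmom 0 le_rfl⟩,
    sum_smul_dirac_apply_eq_zero _ fun n => not_not_intro (hx n).1, hmom, ?_⟩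
  rw [lintegral_sum_smul_dirac]
  simp_rw [hweight, a, sub_self, Real.exp_zero, ENNReal.ofReal_one]
  exact ENNReal.tsum_const_eq_top_of_ne_zero one_ne_zero

theorem stmt_0_general (β : ℝ) (hβ : 1 ≤ β) (S : Set ℂ) :
    (∃ b > (0 : ℝ),
        Bornology.IsBounded (S \ {z : ℂ | b * |z.im| ^ (1 / β) ≤ z.re})) ↔
    (∀ ν : Measure ℂ, IsFiniteMeasure ν → ν Sᶜ = 0 →
      (∀ t : ℝ, 0 ≤ t → ∫⁻ z, ENNReal.ofReal (Real.exp (t * z.re)) ∂ν < ⊤) →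
      ∀ s > (0 : ℝ), ∀ t ≥ (0 : ℝ),
        ∫⁻ z, ENNReal.ofReal
          (Real.exp (s * ‖z‖ ^ (1 / β)) * Real.exp (t * z.re)) ∂ν < ⊤) := by
  refine ⟨fun ⟨b, hb, hbdd⟩ ν _ hν hmom s hs t ht =>
    lintegral_exp_rpow_norm_mul_exp_re_lt_top hβ hb hbdd hν hmom hs.le ht, fun h => ?_⟩
  by_contra! hunbdd
  obtain ⟨ν, hfin, hν, hmom, hinf⟩ :=
    exists_measure_of_forall_not_isBounded (by linarith) hunbdd
  have hlt := h ν hfin hν hmom 1 one_pos 0 le_rfl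
  simp only [one_mul, zero_mul, Real.exp_zero, mul_one] at hlt
  exact hlt.ne hinf

/-- For `β ≥ 1` and a Borel set `S ⊆ ℂ`, the following are equivalent:
(i) there is `b > 0` such that `S \ 𝒫^β_b` is bounded, where
`𝒫^β_b = {λ : Re λ ≥ b·|Im λ|^(1/β)}`;
(ii) every finite positive Borel measure `ν` carried by `S` with all exponential
moments satisfies `∫ e^(s|λ|^(1/β)) e^(t·Re λ) dν < ∞` for all `s > 0`, `t ≥ 0`. -/
theorem stmt_0 (β : ℝ) (hβ : 1 ≤ β) (S : Set ℂ) (hS : MeasurableSet S) :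
    (∃ b > (0 : ℝ),
        Bornology.IsBounded (S \ {z : ℂ | b * |z.im| ^ (1 / β) ≤ z.re})) ↔
    (∀ ν : Measure ℂ, IsFiniteMeasure ν → ν Sᶜ = 0 →
      (∀ t : ℝ, 0 ≤ t → ∫⁻ z, ENNReal.ofReal (Real.exp (t * z.re)) ∂ν < ⊤) →
      ∀ s > (0 : ℝ), ∀ t ≥ (0 : ℝ),
        ∫⁻ z, ENNReal.ofReal
          (Real.exp (s * ‖z‖ ^ (1 / β)) * Real.exp (t * z.re)) ∂ν < ⊤) :=
  stmt_0_general β hβ S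
end

section
/- Let S ⊆ ℂ be a Borel set. The following are equivalent: (i) there exists b > 0 such that the set S ∖ {λ ∈ ℂ : Re λ ≥ b·|Im λ|} is bounded; (ii) every finite positive Borel measure ν on ℂ with ν(ℂ ∖ S) = 0 that has all exponential moments satisfies ∫_ℂ e^(s·|λ|) · e^(t·Re λ) dν(λ) < ∞ for all s > 0 and all t ≥ 0. -/
/-!
If `S` leaves the sector `b |Im z| ≤ Re z` only inside the ball of radius `R`, then on `S`
`e^{s‖z‖} e^{t Re z} ≤ e^{(s + t) R} + e^{(s (1 + b⁻¹) + t) Re z}`, because in the sector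
`‖z‖ ≤ |Re z| + |Im z| ≤ (1 + b⁻¹) Re z`; integrating gives a constant plus an exponential moment.

Conversely, if no sector works, pick `zₙ ∈ S` with `(n + 1) Re zₙ ≤ ‖zₙ‖` and `‖zₙ‖ ≥ n + 1`.
The measure `∑ e^{-‖zₙ‖} δ_{zₙ}` is carried by `S`, and its `t`-th exponential moment is
finite because `t Re zₙ - ‖zₙ‖ ≤ -n/2` once `n ≥ 2t`; but `∫ e^{‖z‖}` is a sum of ones.
-/

open MeasureTheory Filter Real

namespace Complex

def sector (b : ℝ) : Set ℂ := {z | b * |z.im| ≤ z.re}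

theorem norm_le_mul_re_of_mem_sector {b : ℝ} {z : ℂ} (hb : 0 < b) (hz : z ∈ sector b) :
    ‖z‖ ≤ (1 + b⁻¹) * z.re := by
  have hre : 0 ≤ z.re := le_trans (by positivity) hz
  have him : |z.im| ≤ b⁻¹ * z.re := by
    rw [inv_mul_eq_div, le_div_iff₀' hb]
    exact hz
  calc ‖z‖ ≤ |z.re| + |z.im| := norm_le_abs_re_add_abs_im z
    _ ≤ z.re + b⁻¹ * z.re := by rw [abs_of_nonneg hre]; gcongr
    _ = (1 + b⁻¹) * z.re := by ring

end Complex

def HasExpMoments (ν : Measure ℂ) : Prop :=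
  ∀ t : ℝ, 0 ≤ t → ∫⁻ z, ENNReal.ofReal (exp (t * z.re)) ∂ν < ⊤

theorem HasExpMoments.isFiniteMeasure {ν : Measure ℂ} (h : HasExpMoments ν) :
    IsFiniteMeasure ν := by
  constructor
  simpa using h 0 le_rfl

section SectorBound

variable {S : Set ℂ} {b R s t : ℝ}

theorem exp_mul_norm_mul_exp_mul_re_le (hb : 0 < b)
    (hR : S \ Complex.sector b ⊆ Metric.closedBall 0 R) (hs : 0 ≤ s) (ht : 0 ≤ t) {z : ℂ}
    (hz : z ∈ S) :
    exp (s * ‖z‖) * exp (t * z.re) ≤ exp ((s + t) * R) + exp ((s * (1 + b⁻¹) + t) * z.re) := by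
  rw [← exp_add]
  by_cases hsec : z ∈ Complex.sector b
  · have hnorm := Complex.norm_le_mul_re_of_mem_sector hb hsec
    refine le_add_of_nonneg_of_le (exp_pos _).le (exp_le_exp.2 ?_)
    nlinarith
  · have hzR : ‖z‖ ≤ R := by simpa using hR ⟨hz, hsec⟩
    have hre : z.re ≤ R := (Complex.re_le_norm z).trans hzR
    refine le_add_of_le_of_nonneg (exp_le_exp.2 ?_) (exp_pos _).le
    nlinarith

theorem lintegral_exp_mul_norm_mul_exp_mul_re_lt_top (hb : 0 < b)
    (hS : Bornology.IsBounded (S \ Complex.sector b)) {ν : Measure ℂ}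
    (hνS : ν Sᶜ = 0) (hν : HasExpMoments ν) (hs : 0 ≤ s) (ht : 0 ≤ t) :
    ∫⁻ z, ENNReal.ofReal (exp (s * ‖z‖) * exp (t * z.re)) ∂ν < ⊤ := by
  have := hν.isFiniteMeasure
  obtain ⟨R, hR⟩ := (Metric.isBounded_iff_subset_closedBall 0).1 hS
  have hbound : ∀ᵐ z ∂ν, ENNReal.ofReal (exp (s * ‖z‖) * exp (t * z.re)) ≤
      ENNReal.ofReal (exp ((s + t) * R)) +
        ENNReal.ofReal (exp ((s * (1 + b⁻¹) + t) * z.re)) := by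
    filter_upwards [mem_ae_iff.2 hνS] with z hz
    rw [← ENNReal.ofReal_add (exp_pos _).le (exp_pos _).le]
    exact ENNReal.ofReal_le_ofReal (exp_mul_norm_mul_exp_mul_re_le hb hR hs ht hz)
  calc _ ≤ ∫⁻ z, (ENNReal.ofReal (exp ((s + t) * R)) +
        ENNReal.ofReal (exp ((s * (1 + b⁻¹) + t) * z.re))) ∂ν := lintegral_mono_ae hbound
    _ = ENNReal.ofReal (exp ((s + t) * R)) * ν Set.univ +
        ∫⁻ z, ENNReal.ofReal (exp ((s * (1 + b⁻¹) + t) * z.re)) ∂ν := by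
      rw [lintegral_add_left measurable_const, lintegral_const]
    _ < ⊤ := ENNReal.add_lt_top.2
      ⟨ENNReal.mul_lt_top ENNReal.ofReal_lt_top (measure_lt_top ν _), hν _ (by positivity)⟩

end SectorBound

theorem ENNReal.tsum_ofReal_exp_lt_top {f : ℕ → ℝ} {a : ℝ} (ha : a < 0)
    (hf : ∀ᶠ n in atTop, f n ≤ n * a) : ∑' n, ENNReal.ofReal (exp (f n)) < ⊤ := by
  have hsum : Summable fun n => exp (f n) := by
    refine (summable_exp_nat_mul_iff.2 ha).of_norm_bounded_eventually ?_
    rw [Nat.cofinite_eq_atTop]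
    filter_upwards [hf] with n hn
    rw [norm_of_nonneg (exp_pos _).le]
    exact exp_le_exp.2 hn
  rw [← ENNReal.ofReal_tsum_of_nonneg (fun n => (exp_pos _).le) hsum]
  exact ENNReal.ofReal_lt_top

theorem exists_seq_of_forall_not_isBounded_diff_sector {S : Set ℂ}
    (h : ∀ b > (0 : ℝ), ¬Bornology.IsBounded (S \ Complex.sector b)) :
    ∃ z : ℕ → ℂ, (∀ n, z n ∈ S) ∧ (∀ n : ℕ, (n + 1) * (z n).re ≤ ‖z n‖) ∧
      ∀ n : ℕ, (n + 1 : ℝ) ≤ ‖z n‖ := by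
  have hpt : ∀ n : ℕ, ∃ w ∈ S \ Complex.sector ((n : ℝ) + 1)⁻¹, (n + 1 : ℝ) < ‖w‖ := by
    intro n
    have hunb := h ((n : ℝ) + 1)⁻¹ (by positivity)
    obtain ⟨w, hw, hwR⟩ := Set.not_subset.1 <|
      not_exists.1 ((Metric.isBounded_iff_subset_closedBall 0).not.1 hunb) (n + 1)
    exact ⟨w, hw, by simpa using hwR⟩
  choose z hzS hnorm using hpt
  refine ⟨z, fun n => (hzS n).1, fun n => ?_, fun n => (hnorm n).le⟩
  have hsec : (z n).re < ((n : ℝ) + 1)⁻¹ * |(z n).im| := lt_of_not_ge (hzS n).2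
  rw [inv_mul_eq_div, lt_div_iff₀ (by positivity)] at hsec
  linarith [Complex.abs_im_le_norm (z n)]

noncomputable def expDiracSum (z : ℕ → ℂ) : Measure ℂ :=
  Measure.sum fun n => ENNReal.ofReal (exp (-‖z n‖)) • Measure.dirac (z n)

section ExpDiracSum

variable {z : ℕ → ℂ}

theorem lintegral_expDiracSum (f : ℂ → ENNReal) :
    ∫⁻ x, f x ∂expDiracSum z = ∑' n, ENNReal.ofReal (exp (-‖z n‖)) * f (z n) := by
  simp only [expDiracSum, lintegral_sum_measure, lintegral_smul_measure, lintegral_dirac,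
    smul_eq_mul]

theorem expDiracSum_compl {S : Set ℂ} (hz : ∀ n, z n ∈ S) : expDiracSum z Sᶜ = 0 := by
  simp [expDiracSum, Measure.sum_apply_of_countable, hz]

theorem hasExpMoments_expDiracSum (hre : ∀ n : ℕ, (n + 1) * (z n).re ≤ ‖z n‖)
    (hnorm : ∀ n : ℕ, (n + 1 : ℝ) ≤ ‖z n‖) : HasExpMoments (expDiracSum z) := by
  intro t ht
  rw [lintegral_expDiracSum]
  simp_rw [← ENNReal.ofReal_mul (exp_pos _).le, ← exp_add]
  refine ENNReal.tsum_ofReal_exp_lt_top (a := -1 / 2) (by norm_num) ?_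
  filter_upwards [eventually_ge_atTop ⌈2 * t⌉₊] with n hn
  have h2t : 2 * t ≤ n := (Nat.le_ceil _).trans (by exact_mod_cast hn)
  nlinarith [hre n, hnorm n]

theorem lintegral_exp_norm_expDiracSum :
    ∫⁻ x, ENNReal.ofReal (exp ‖x‖) ∂expDiracSum z = ⊤ := by
  simp_rw [lintegral_expDiracSum, ← ENNReal.ofReal_mul (exp_pos _).le, ← exp_add,
    neg_add_cancel, exp_zero, ENNReal.ofReal_one]
  exact ENNReal.tsum_const_eq_top_of_ne_zero one_ne_zero

end ExpDiracSum

theorem stmt_1_general (S : Set ℂ) :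
    (∃ b > (0 : ℝ), Bornology.IsBounded (S \ {z : ℂ | b * |z.im| ≤ z.re})) ↔
    (∀ ν : Measure ℂ, IsFiniteMeasure ν → ν Sᶜ = 0 →
      (∀ t : ℝ, 0 ≤ t → ∫⁻ z, ENNReal.ofReal (Real.exp (t * z.re)) ∂ν < ⊤) →
      ∀ s > (0 : ℝ), ∀ t ≥ (0 : ℝ),
        ∫⁻ z, ENNReal.ofReal
          (Real.exp (s * ‖z‖) * Real.exp (t * z.re)) ∂ν < ⊤) := by
  constructor
  · rintro ⟨b, hb, hbd⟩ ν - hνS hν s hs t ht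
    exact lintegral_exp_mul_norm_mul_exp_mul_re_lt_top hb hbd hνS hν hs.le ht
  · intro H
    by_contra! hnot
    obtain ⟨z, hzS, hre, hnorm⟩ := exists_seq_of_forall_not_isBounded_diff_sector hnot
    have hmom := hasExpMoments_expDiracSum hre hnorm
    have hfin := H _ hmom.isFiniteMeasure (expDiracSum_compl hzS) hmom 1 one_pos 0 le_rfl
    simp only [one_mul, zero_mul, exp_zero, mul_one, lintegral_exp_norm_expDiracSum] at hfin
    exact lt_irrefl _ hfin

/-- For a Borel set `S ⊆ ℂ`, the following are equivalent:
(i) there is `b > 0` such that `S \ {λ : Re λ ≥ b·|Im λ|}` is bounded;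
(ii) every finite positive Borel measure `ν` carried by `S` with all exponential
moments satisfies `∫ e^(s|λ|) e^(t·Re λ) dν < ∞` for all `s > 0`, `t ≥ 0`. -/
theorem stmt_1 (S : Set ℂ) (hS : MeasurableSet S) :
    (∃ b > (0 : ℝ), Bornology.IsBounded (S \ {z : ℂ | b * |z.im| ≤ z.re})) ↔
    (∀ ν : Measure ℂ, IsFiniteMeasure ν → ν Sᶜ = 0 →
      (∀ t : ℝ, 0 ≤ t → ∫⁻ z, ENNReal.ofReal (Real.exp (t * z.re)) ∂ν < ⊤) →
      ∀ s > (0 : ℝ), ∀ t ≥ (0 : ℝ),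
        ∫⁻ z, ENNReal.ofReal
          (Real.exp (s * ‖z‖) * Real.exp (t * z.re)) ∂ν < ⊤) :=
  stmt_1_general S
end

section
/- Let β ≥ 1 and let S ⊆ ℂ be a Borel set such that for every b > 0 the set S ∖ 𝒫^β_b is unbounded. Then there exists a finite positive Borel measure ν on ℂ with ν(ℂ ∖ S) = 0 that has all exponential moments and satisfies ∫_ℂ e^(s·|λ|^(1/β)) dν(λ) = ∞ for every s > 0. -/
/-!
Choose `z n ∈ S` with `Re (z n) ≤ a n / (n + 1) ^ 2` and `a n ≥ 2 (n + 1) ^ 2`, where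
`a n = ‖z n‖ ^ (1 / β)`, and put `ν = ∑ n, exp (-a n / (n + 1)) • δ_(z n)`. For `t ≥ 0` the
`n`-th term of `∫ exp (t Re λ) dν` is at most `exp (-a n / (2 (n + 1))) ≤ exp (-(n + 1))` as soon
as `n + 1 ≥ 2 t` (the case `t = 0` gives finiteness of `ν`), while for `s > 0` the `n`-th term of
`∫ exp (s ‖λ‖ ^ (1 / β)) dν` is at least `1` as soon as `s (n + 1) ≥ 1`.
-/

open MeasureTheory Filter

theorem ENNReal.tsum_ofReal_exp_ne_top_of_eventually_le_neg {u : ℕ → ℝ}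
    (hu : ∀ᶠ n in atTop, u n ≤ -n) : ∑' n, ENNReal.ofReal (Real.exp (u n)) ≠ ⊤ := by
  have hsum : Summable fun n => Real.exp (u n) :=
    Real.summable_exp_neg_nat.of_norm_bounded_eventually_nat <| hu.mono fun n hn => by
      rw [Real.norm_eq_abs, abs_of_pos (Real.exp_pos _)]
      exact Real.exp_le_exp.2 hn
  rw [← ENNReal.ofReal_tsum_of_nonneg (fun _ => (Real.exp_pos _).le) hsum]
  exact ENNReal.ofReal_ne_top

theorem ENNReal.tsum_ofReal_exp_eq_top_of_eventually_nonneg {u : ℕ → ℝ}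
    (hu : ∀ᶠ n in atTop, 0 ≤ u n) : ∑' n, ENNReal.ofReal (Real.exp (u n)) = ⊤ := by
  by_contra h
  have hlim := ENNReal.tendsto_atTop_zero_of_tsum_ne_top h
  have hone : ∀ᶠ n in atTop, 1 ≤ ENNReal.ofReal (Real.exp (u n)) :=
    hu.mono fun n hn => by simpa using Real.one_le_exp hn
  obtain ⟨n, hn_one, hn_small⟩ := (hone.and (hlim.eventually (gt_mem_nhds zero_lt_one))).exists
  exact not_lt.2 hn_one hn_small

theorem MeasureTheory.lintegral_ofReal_exp_sum_dirac {α : Type*} [MeasurableSpace α]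
    [MeasurableSingletonClass α] (c : ℕ → ℝ) (x : ℕ → α) (f : α → ℝ) :
    ∫⁻ a, ENNReal.ofReal (Real.exp (f a))
        ∂(Measure.sum fun n => ENNReal.ofReal (Real.exp (c n)) • Measure.dirac (x n)) =
      ∑' n, ENNReal.ofReal (Real.exp (c n + f (x n))) := by
  simp only [lintegral_sum_measure, lintegral_smul_measure, lintegral_dirac, smul_eq_mul,
    Real.exp_add, ENNReal.ofReal_mul (Real.exp_pos _).le]

theorem Complex.exists_mem_re_le_mul_norm_rpow_of_not_isBounded {S : Set ℂ} {b p : ℝ}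
    (hb : 0 ≤ b) (hp : 0 < p) (hS : ¬ Bornology.IsBounded (S \ {z : ℂ | b * |z.im| ^ p ≤ z.re}))
    (R : ℝ) : ∃ z ∈ S, z.re ≤ b * ‖z‖ ^ p ∧ R ≤ ‖z‖ ^ p := by
  have hfreq : ∃ᶠ z in Bornology.cobounded ℂ, z ∈ S \ {z : ℂ | b * |z.im| ^ p ≤ z.re} := by
    rwa [Bornology.isBounded_def] at hS
  have hlarge : ∀ᶠ z in Bornology.cobounded ℂ, R ≤ ‖z‖ ^ p :=
    ((tendsto_rpow_atTop hp).comp tendsto_norm_cobounded_atTop).eventually_ge_atTop R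
  obtain ⟨z, ⟨hzS, hzre⟩, hzR⟩ := (hfreq.and_eventually hlarge).exists
  refine ⟨z, hzS, ?_, hzR⟩
  calc z.re ≤ b * |z.im| ^ p := (not_le.1 hzre).le
    _ ≤ b * ‖z‖ ^ p := by gcongr; exact Complex.abs_im_le_norm z

theorem neg_div_add_mul_le_neg {t r A m : ℝ} (hm : 0 < m) (ht : 0 ≤ t) (htm : 2 * t ≤ m)
    (hr : r ≤ A / m ^ 2) (hA : 2 * m ^ 2 ≤ A) : -(A / m) + t * r ≤ -m := by
  have htr : t * r ≤ A / m / 2 :=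
    calc t * r ≤ t * (A / m ^ 2) := mul_le_mul_of_nonneg_left hr ht
      _ ≤ m / 2 * (A / m ^ 2) :=
        mul_le_mul_of_nonneg_right (by linarith) (div_nonneg (by nlinarith) (by positivity))
      _ = A / m / 2 := by field_simp
  have hAm : 2 * m ≤ A / m := by rw [le_div_iff₀ hm]; nlinarith
  linarith

theorem neg_div_add_mul_nonneg {s A m : ℝ} (hm : 0 < m) (hA : 0 ≤ A) (hsm : 1 ≤ s * m) :
    0 ≤ -(A / m) + s * A := by
  have : A / m ≤ s * A := by rw [div_le_iff₀ hm]; nlinarith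
  linarith

theorem stmt_3_general (β : ℝ) (hβ : 1 ≤ β) (S : Set ℂ)
    (hub : ∀ b > (0 : ℝ),
      ¬ Bornology.IsBounded (S \ {z : ℂ | b * |z.im| ^ (1 / β) ≤ z.re})) :
    ∃ ν : Measure ℂ, IsFiniteMeasure ν ∧ ν Sᶜ = 0 ∧
      (∀ t : ℝ, 0 ≤ t → ∫⁻ z, ENNReal.ofReal (Real.exp (t * z.re)) ∂ν < ⊤) ∧
      (∀ s > (0 : ℝ),
        ∫⁻ z, ENNReal.ofReal (Real.exp (s * ‖z‖ ^ (1 / β))) ∂ν = ⊤) := by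
  have hp : 0 < 1 / β := one_div_pos.2 (by linarith)
  choose z hzS hzre hzlarge using fun n : ℕ =>
    Complex.exists_mem_re_le_mul_norm_rpow_of_not_isBounded (R := 2 * ((n : ℝ) + 1) ^ 2)
      (by positivity) hp (hub (1 / ((n : ℝ) + 1) ^ 2) (by positivity))
  set ν := Measure.sum fun n : ℕ =>
    ENNReal.ofReal (Real.exp (-(‖z n‖ ^ (1 / β) / ((n : ℝ) + 1)))) • Measure.dirac (z n)
  have hmoment : ∀ t : ℝ, 0 ≤ t → ∫⁻ z, ENNReal.ofReal (Real.exp (t * z.re)) ∂ν < ⊤ := by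
    intro t ht
    rw [lintegral_ofReal_exp_sum_dirac]
    refine (ENNReal.tsum_ofReal_exp_ne_top_of_eventually_le_neg ?_).lt_top
    filter_upwards [tendsto_natCast_atTop_atTop.eventually_ge_atTop (2 * t)] with n hn
    have hzre' := (hzre n).trans_eq (one_div_mul_eq_div _ _)
    linarith [neg_div_add_mul_le_neg (by positivity) ht (by linarith) hzre' (hzlarge n)]
  refine ⟨ν, ⟨by simpa using hmoment 0 le_rfl⟩, ?_, hmoment, fun s hs => ?_⟩
  · simp [ν, Measure.sum_apply_eq_zero, hzS]
  · rw [lintegral_ofReal_exp_sum_dirac]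
    refine ENNReal.tsum_ofReal_exp_eq_top_of_eventually_nonneg ?_
    filter_upwards [tendsto_natCast_atTop_atTop.eventually_ge_atTop (1 / s)] with n hn
    refine neg_div_add_mul_nonneg (by positivity) (by positivity) ?_
    rw [div_le_iff₀ hs] at hn
    nlinarith

/-- Let `β ≥ 1` and let `S ⊆ ℂ` be a Borel set such that for every `b > 0` the set
`S \ 𝒫^β_b` is unbounded, where `𝒫^β_b = {λ : Re λ ≥ b·|Im λ|^(1/β)}`. Then there is a
finite positive Borel measure `ν` carried by `S` which has all exponential moments and
satisfies `∫ e^(s·|λ|^(1/β)) dν(λ) = ∞` for every `s > 0`. -/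
theorem stmt_3 (β : ℝ) (hβ : 1 ≤ β) (S : Set ℂ) (hS : MeasurableSet S)
    (hub : ∀ b > (0 : ℝ),
      ¬ Bornology.IsBounded (S \ {z : ℂ | b * |z.im| ^ (1 / β) ≤ z.re})) :
    ∃ ν : Measure ℂ, IsFiniteMeasure ν ∧ ν Sᶜ = 0 ∧
      (∀ t : ℝ, 0 ≤ t → ∫⁻ z, ENNReal.ofReal (Real.exp (t * z.re)) ∂ν < ⊤) ∧
      (∀ s > (0 : ℝ),
        ∫⁻ z, ENNReal.ofReal (Real.exp (s * ‖z‖ ^ (1 / β))) ∂ν = ⊤) :=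
  stmt_3_general β hβ S hub
end

section
/- Let β ≥ 1 and b > 0 be real numbers and let λ ∈ ℂ satisfy Re λ ≥ 1 and Re λ ≥ b·|Im λ|^(1/β). Then |λ|^(1/β) ≤ (1 + b^(−β))^(1/β) · Re λ; consequently, for all s ≥ 0 and t ≥ 0, e^(s·|λ|^(1/β)) · e^(t·Re λ) ≤ e^((s·(1 + b^(−β))^(1/β) + t)·Re λ). -/
/-!
On `𝒫^β_b` we have `|Im λ| ≤ b^(-β) (Re λ)^β`, and `Re λ ≤ (Re λ)^β` once `Re λ ≥ 1`, so
`|λ| ≤ Re λ + |Im λ| ≤ (1 + b^(-β)) (Re λ)^β`; taking `β`-th roots gives the first bound, and the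
exponential bound follows by monotonicity of `exp`.
-/

open Real

lemma le_rpow_neg_mul_rpow_of_mul_rpow_inv_le {β b a x : ℝ} (hβ : 0 < β) (hb : 0 < b)
    (ha : 0 ≤ a) (h : b * a ^ (1 / β) ≤ x) : a ≤ b ^ (-β) * x ^ β := by
  have hx : 0 ≤ x := le_trans (by positivity) h
  have hroot : a ^ (1 / β) ≤ x / b := by rwa [le_div_iff₀' hb]
  calc a = (a ^ (1 / β)) ^ β := by rw [← rpow_mul ha, one_div_mul_cancel hβ.ne', rpow_one]
    _ ≤ (x / b) ^ β := rpow_le_rpow (by positivity) hroot hβ.le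
    _ = b ^ (-β) * x ^ β := by rw [div_rpow hx hb.le, rpow_neg hb.le]; ring

lemma Complex.norm_le_mul_re_rpow {β c : ℝ} {z : ℂ} (hβ : 1 ≤ β) (hre : 1 ≤ z.re)
    (him : |z.im| ≤ c * z.re ^ β) : ‖z‖ ≤ (1 + c) * z.re ^ β := by
  have hre_le : z.re ≤ z.re ^ β := by
    simpa using rpow_le_rpow_of_exponent_le hre hβ
  calc ‖z‖ ≤ |z.re| + |z.im| := Complex.norm_le_abs_re_add_abs_im z
    _ = z.re + |z.im| := by rw [abs_of_pos (by linarith)]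
    _ ≤ (1 + c) * z.re ^ β := by linarith

lemma rpow_inv_le_of_le_mul_rpow {β C a x : ℝ} (hβ : 0 < β) (ha : 0 ≤ a) (hC : 0 ≤ C)
    (hx : 0 ≤ x) (h : a ≤ C * x ^ β) : a ^ (1 / β) ≤ C ^ (1 / β) * x :=
  calc a ^ (1 / β) ≤ (C * x ^ β) ^ (1 / β) := rpow_le_rpow ha h (by positivity)
    _ = C ^ (1 / β) * x := by
      rw [mul_rpow hC (by positivity), ← rpow_mul hx, mul_one_div_cancel hβ.ne', rpow_one]

/-- Pointwise estimate on `𝒫^β_b ∩ {Re λ ≥ 1}`: if `β ≥ 1`, `b > 0`, `Re λ ≥ 1` and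
`Re λ ≥ b·|Im λ|^(1/β)`, then `|λ|^(1/β) ≤ (1 + b^(−β))^(1/β)·Re λ`, and consequently,
for all `s, t ≥ 0`,
`e^(s·|λ|^(1/β)) · e^(t·Re λ) ≤ e^((s·(1 + b^(−β))^(1/β) + t)·Re λ)`. -/
theorem stmt_5 (β b : ℝ) (hβ : 1 ≤ β) (hb : 0 < b) (z : ℂ)
    (h1 : 1 ≤ z.re) (h2 : b * |z.im| ^ (1 / β) ≤ z.re) :
    ‖z‖ ^ (1 / β) ≤ (1 + b ^ (-β)) ^ (1 / β) * z.re ∧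
    ∀ s t : ℝ, 0 ≤ s → 0 ≤ t →
      Real.exp (s * ‖z‖ ^ (1 / β)) * Real.exp (t * z.re) ≤
        Real.exp ((s * (1 + b ^ (-β)) ^ (1 / β) + t) * z.re) := by
  have hβ0 : 0 < β := by linarith
  have him := le_rpow_neg_mul_rpow_of_mul_rpow_inv_le hβ0 hb (abs_nonneg z.im) h2
  have hnorm := Complex.norm_le_mul_re_rpow hβ h1 him
  have key : ‖z‖ ^ (1 / β) ≤ (1 + b ^ (-β)) ^ (1 / β) * z.re :=
    rpow_inv_le_of_le_mul_rpow hβ0 (norm_nonneg z) (by positivity) (by linarith) hnorm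
  refine ⟨key, fun s t hs _ => ?_⟩
  rw [← Real.exp_add, Real.exp_le_exp]
  linarith [mul_le_mul_of_nonneg_left key hs]
end
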